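/- For all positive integers p and c, every c-coloring of the positive integers admits a set H = {a₀ < ... < a_{l-1}} of positive integers with ∑H monochromatic, p ≤ l, and a_{p-1} ≤ l. (Infinitary form implying the existence of Spencer numbers with m = 1.) -/

import Mathlib

/-!
By Hindman's theorem there is a sequence `b` of positive integers all of whose finite sums have
the same colour. Cut `b` into consecutive blocks, the block after one with sum `s` having `s + 1`
terms; the block sums `a₀ < a₁ < ⋯` are then strictly increasing, and every finite sum of them is
a finite sum of `b`. Taking `l = max p a_{p-1}` finishes the proof.
-/

open Finset

namespace Hindman

theorem pos_of_mem_FS {a : Stream' ℕ} (ha : ∀ i, 0 < a.get i) {m : ℕ} (hm : m ∈ FS a) :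
    0 < m := by
  induction hm with
  | head' a => exact ha 0
  | tail' a m _ ih => exact ih fun i => ha (i + 1)
  | cons' a m _ _ => exact Nat.add_pos_left (ha 0) m

theorem exists_pos_forall_mem_FS_eq {κ : Type*} [Finite κ] (chi : ℕ → κ) :
    ∃ b : Stream' ℕ, (∀ i, 0 < b.get i) ∧ ∃ col : κ, ∀ m ∈ FS b, chi m = col := by
  let cell : κ → Set ℕ := fun j => {x | 0 < x ∧ chi x = j}
  have hcover : FS (fun n => n + 1 : Stream' ℕ) ⊆ ⋃₀ Set.range cell := fun m hm =>
    ⟨cell (chi m), ⟨chi m, rfl⟩, pos_of_mem_FS (fun i => i.succ_pos) hm, rfl⟩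
  obtain ⟨_, ⟨col, rfl⟩, b, hb⟩ := FS_partition_regular _ _ (Set.finite_range cell) hcover
  exact ⟨b, fun i => (hb (FS.singleton b i)).1, col, fun m hm => (hb hm).2⟩

end Hindman

section Blocks

variable (b : ℕ → ℕ)

/-- Block `k` of `b` is `Ico (blockEnd b k) (blockEnd b (k + 1))`. -/
def blockEnd : ℕ → ℕ
  | 0 => 0
  | 1 => 1
  | k + 2 => blockEnd (k + 1) + ∑ i ∈ Ico (blockEnd k) (blockEnd (k + 1)), b i + 1

def blockSum (k : ℕ) : ℕ :=
  ∑ i ∈ Ico (blockEnd b k) (blockEnd b (k + 1)), b i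

theorem blockEnd_add_two (k : ℕ) : blockEnd b (k + 2) = blockEnd b (k + 1) + blockSum b k + 1 :=
  rfl

theorem blockEnd_strictMono : StrictMono (blockEnd b) := by
  refine strictMono_nat_of_lt_succ fun k => ?_
  cases k with
  | zero => simp [blockEnd]
  | succ k => rw [blockEnd_add_two]; omega

theorem sum_blockSum (I : Finset ℕ) :
    ∑ k ∈ I, blockSum b k =
      ∑ i ∈ I.biUnion fun k => Ico (blockEnd b k) (blockEnd b (k + 1)), b i := by
  refine (sum_biUnion fun j _ k _ hjk => ?_).symm
  rw [Function.onFun, ← disjoint_coe, coe_Ico, coe_Ico]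
  exact (blockEnd_strictMono b).monotone.pairwise_disjoint_on_Ico_succ hjk

variable {b}

theorem blockSum_pos (hb : ∀ i, 0 < b i) (k : ℕ) : 0 < blockSum b k :=
  sum_pos (fun i _ => hb i) (nonempty_Ico.2 (blockEnd_strictMono b k.lt_succ_self))

theorem blockSum_strictMono (hb : ∀ i, 0 < b i) : StrictMono (blockSum b) := by
  refine strictMono_nat_of_lt_succ fun k => ?_
  have hcard : #(Ico (blockEnd b (k + 1)) (blockEnd b (k + 2))) = blockSum b k + 1 := by
    rw [Nat.card_Ico, blockEnd_add_two]; omega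
  calc blockSum b k < #(Ico (blockEnd b (k + 1)) (blockEnd b (k + 2))) := by omega
    _ = #(Ico (blockEnd b (k + 1)) (blockEnd b (k + 2))) • 1 := by rw [smul_eq_mul, mul_one]
    _ ≤ blockSum b (k + 1) := card_nsmul_le_sum _ _ _ fun i _ => hb i

end Blocks

theorem sum_blockSum_mem_FS (b : Stream' ℕ) {I : Finset ℕ} (hI : I.Nonempty) :
    ∑ k ∈ I, blockSum b.get k ∈ Hindman.FS b := by
  rw [sum_blockSum]
  refine Hindman.FS.finsetSum b _ (biUnion_nonempty.2 ?_)
  obtain ⟨k, hk⟩ := hI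
  exact ⟨k, hk, nonempty_Ico.2 (blockEnd_strictMono b.get k.lt_succ_self)⟩

theorem stmt_10_general (p c : ℕ) (hp : 0 < p) (chi : ℕ → Fin c) :
    ∃ (l : ℕ) (a : Fin l → ℕ) (hpl : p ≤ l),
      StrictMono a ∧ (∀ i, 0 < a i) ∧
      a ⟨p - 1, lt_of_lt_of_le (Nat.pred_lt hp.ne') hpl⟩ ≤ l ∧
      ∃ col : Fin c, ∀ I : Finset (Fin l), I.Nonempty → chi (∑ i ∈ I, a i) = col := by
  obtain ⟨b, hb, col, hcol⟩ := Hindman.exists_pos_forall_mem_FS_eq chi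
  refine ⟨max p (blockSum b.get (p - 1)), fun i => blockSum b.get i, le_max_left _ _,
    fun i j hij => blockSum_strictMono hb hij, fun i => blockSum_pos hb i, le_max_right _ _,
    col, fun I hI => hcol _ ?_⟩
  simpa only [sum_map, Fin.valEmbedding_apply] using
    sum_blockSum_mem_FS b (hI.map (f := Fin.valEmbedding))

theorem stmt_10 (p c : ℕ) (hp : 0 < p) (hc : 0 < c) (chi : ℕ → Fin c) :
    ∃ (l : ℕ) (a : Fin l → ℕ) (hpl : p ≤ l),
      StrictMono a ∧ (∀ i, 0 < a i) ∧
      a ⟨p - 1, lt_of_lt_of_le (Nat.pred_lt hp.ne') hpl⟩ ≤ l ∧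
      ∃ col : Fin c, ∀ I : Finset (Fin l), I.Nonempty → chi (∑ i ∈ I, a i) = col :=
  stmt_10_general p c hp chi
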